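/- For every integer n ≤ −1, the Riley–Mednykh polynomial P_{2n}(t,M), viewed as a polynomial in the variable t with coefficients depending on the nonzero complex parameter M, has degree exactly −(3n+1), and its leading coefficient (the coefficient of t^{−(3n+1)}) equals (−1)^{n+1}·M^{−4n−2}. In particular, for each fixed M ≠ 0, P_{2n}(·,M) has exactly −(3n+1) roots in ℂ counted with multiplicity. -/

import Mathlib

open Polynomial

/-- The coefficient `Q(t,M)` of the Riley–Mednykh recursion, as a polynomial
in `t`. -/
noncomputable def coeffQPoly (M : ℂ) : Polynomial ℂ :=
  C (-M ^ 4) * X ^ 3 + C (-2 * M ^ 6 + 2 * M ^ 4 - 2 * M ^ 2) * X ^ 2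
    + C (-M ^ 8 + 2 * M ^ 6 - 3 * M ^ 4 + 2 * M ^ 2 - 1) * X + C (2 * M ^ 4)

/-- The Riley–Mednykh polynomials for nonpositive indices, as polynomials in
`t`: `RMnegPoly M k = P_{-2k}(·,M)` for `k ≥ 0`, with `P₀ = M⁶`,
`P₋₂ = M²t² + (M⁴ − M² + 1)t + M²`, and the downward recursion
`P_{2n} = Q·P_{2(n+1)} − M⁸·P_{2(n+2)}` for `n ≤ −2`. -/
noncomputable def RMnegPoly (M : ℂ) : ℕ → Polynomial ℂ
  | 0 => C (M ^ 6)
  | 1 => C (M ^ 2) * X ^ 2 + C (M ^ 4 - M ^ 2 + 1) * X + C (M ^ 2)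
  | (k + 2) => coeffQPoly M * RMnegPoly M (k + 1) - C (M ^ 8) * RMnegPoly M k

lemma coeffQPoly_degree (M : ℂ) (hM : M ≠ 0) : (coeffQPoly M).degree = 3 := by
  unfold coeffQPoly; compute_degree!

lemma coeffQPoly_coeff (M : ℂ) : (coeffQPoly M).coeff 3 = -M ^ 4 := by
  simp only [coeffQPoly, coeff_add, coeff_C_mul, coeff_X_pow, coeff_C, coeff_X]
  norm_num

/-- One step of the recursion. -/
lemma RM_step (M : ℂ) (hM : M ≠ 0) (p q : Polynomial ℂ) (d : ℕ) (c : ℂ) (hc0 : c ≠ 0)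
    (hd : p.degree = d) (hcoeff : p.coeff d = c) (hq : q.degree < (d : WithBot ℕ)) :
    (coeffQPoly M * p - C (M ^ 8) * q).degree = ((d + 3 : ℕ) : WithBot ℕ) ∧
    (coeffQPoly M * p - C (M ^ 8) * q).coeff (d + 3) = -M ^ 4 * c := by
  have hQdeg := coeffQPoly_degree M hM
  have hQnd : (coeffQPoly M).natDegree = 3 := natDegree_eq_of_degree_eq_some hQdeg
  have hpnd : p.natDegree = d := natDegree_eq_of_degree_eq_some hd
  have hlead : (coeffQPoly M * p).coeff (d + 3) = -M ^ 4 * c := by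
    have := coeff_mul_degree_add_degree (coeffQPoly M) p
    rw [hQnd, hpnd] at this
    rw [Nat.add_comm d 3]
    rwa [leadingCoeff, leadingCoeff, hQnd, hpnd, coeffQPoly_coeff, hcoeff] at this
  have hmuldeg : (coeffQPoly M * p).degree = ((d + 3 : ℕ) : WithBot ℕ) := by
    rw [degree_mul, hQdeg, hd]
    norm_cast
    omega
  have hqdeg : (C (M ^ 8) * q).degree < ((d + 3 : ℕ) : WithBot ℕ) := by
    calc (C (M ^ 8) * q).degree ≤ q.degree := by
          calc (C (M ^ 8) * q).degree ≤ (C (M ^ 8)).degree + q.degree := degree_mul_le _ _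
            _ ≤ 0 + q.degree := add_le_add degree_C_le le_rfl
            _ = q.degree := zero_add _
      _ < (d : WithBot ℕ) := hq
      _ ≤ ((d + 3 : ℕ) : WithBot ℕ) := by
          exact_mod_cast WithBot.coe_le_coe.2 (by omega : d ≤ d + 3)
  constructor
  · rw [degree_sub_eq_left_of_degree_lt (by rw [hmuldeg]; exact hqdeg), hmuldeg]
  · rw [coeff_sub, coeff_eq_zero_of_degree_lt hqdeg, hlead, sub_zero]

lemma RM_aux (M : ℂ) (hM : M ≠ 0) (k : ℕ) :
    (RMnegPoly M (k + 1)).degree = ((3 * k + 2 : ℕ) : WithBot ℕ) ∧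
    (RMnegPoly M (k + 1)).coeff (3 * k + 2) = (-1) ^ k * M ^ (4 * k + 2) := by
  have hM2 : M ^ 2 ≠ 0 := pow_ne_zero _ hM
  have base1 : (RMnegPoly M 1).degree = ((2 : ℕ) : WithBot ℕ) ∧
      (RMnegPoly M 1).coeff 2 = M ^ 2 := by
    have e : RMnegPoly M 1 = C (M ^ 2) * X ^ 2 + C (M ^ 4 - M ^ 2 + 1) * X + C (M ^ 2) := rfl
    rw [e]
    constructor
    · compute_degree!
    · simp only [coeff_add, coeff_C_mul, coeff_X_pow, coeff_C, coeff_X]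
      norm_num
  have key : ∀ k : ℕ,
      ((RMnegPoly M (k + 1)).degree = ((3 * k + 2 : ℕ) : WithBot ℕ) ∧
        (RMnegPoly M (k + 1)).coeff (3 * k + 2) = (-1) ^ k * M ^ (4 * k + 2)) ∧
      ((RMnegPoly M (k + 2)).degree = ((3 * (k + 1) + 2 : ℕ) : WithBot ℕ) ∧
        (RMnegPoly M (k + 2)).coeff (3 * (k + 1) + 2) = (-1) ^ (k + 1) * M ^ (4 * (k + 1) + 2)) := by
    intro k
    induction k with
    | zero =>
      refine ⟨by simpa using base1, ?_⟩
      have hq : (RMnegPoly M 0).degree < ((2 : ℕ) : WithBot ℕ) := by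
        show (C (M ^ 6)).degree < ((2 : ℕ) : WithBot ℕ)
        calc (C (M ^ 6) : Polynomial ℂ).degree ≤ 0 := degree_C_le
          _ < ((2 : ℕ) : WithBot ℕ) := by norm_cast
      have := RM_step M hM (RMnegPoly M 1) (RMnegPoly M 0) 2 (M ^ 2) hM2
        base1.1 base1.2 hq
      refine ⟨?_, ?_⟩
      · show (coeffQPoly M * RMnegPoly M 1 - C (M ^ 8) * RMnegPoly M 0).degree = _
        exact this.1.trans (congrArg _ (by omega))
      · show (coeffQPoly M * RMnegPoly M 1 - C (M ^ 8) * RMnegPoly M 0).coeff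
            (3 * (0 + 1) + 2) = _
        rw [show (3 * (0 + 1) + 2 : ℕ) = 2 + 3 by norm_num, this.2]
        norm_num
        ring
    | succ k ih =>
      refine ⟨ih.2, ?_⟩
      have hc0 : ((-1) ^ (k + 1) * M ^ (4 * (k + 1) + 2) : ℂ) ≠ 0 := by
        apply mul_ne_zero
        · exact pow_ne_zero _ (by norm_num)
        · exact pow_ne_zero _ hM
      have hq : (RMnegPoly M (k + 1)).degree < ((3 * (k + 1) + 2 : ℕ) : WithBot ℕ) := by
        rw [ih.1.1]
        exact_mod_cast WithBot.coe_lt_coe.2 (by omega)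
      have := RM_step M hM (RMnegPoly M (k + 2)) (RMnegPoly M (k + 1))
        (3 * (k + 1) + 2) ((-1) ^ (k + 1) * M ^ (4 * (k + 1) + 2)) hc0 ih.2.1 ih.2.2 hq
      refine ⟨?_, ?_⟩
      · show (coeffQPoly M * RMnegPoly M (k + 2) - C (M ^ 8) * RMnegPoly M (k + 1)).degree = _
        exact this.1.trans (congrArg _ (by omega))
      · show (coeffQPoly M * RMnegPoly M (k + 2) - C (M ^ 8) * RMnegPoly M (k + 1)).coeff
            (3 * (k + 1 + 1) + 2) = _
        rw [show 3 * (k + 1 + 1) + 2 = 3 * (k + 1) + 2 + 3 by omega, this.2]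
        rw [show 4 * (k + 1 + 1) + 2 = 4 + (4 * (k + 1) + 2) by omega, pow_add, pow_succ]
        ring
  exact (key k).1

/-- For every integer `n ≤ −1`, the polynomial `P_{2n}(·,M)` has degree
exactly `−(3n+1)`, its coefficient of `t^{−(3n+1)}` is `(−1)^{n+1}·M^{−4n−2}`,
and it has exactly `−(3n+1)` roots in `ℂ` counted with multiplicity. -/
theorem RMnegPoly_degree (M : ℂ) (hM : M ≠ 0) (n : ℤ) (hn : n ≤ -1) :
    (RMnegPoly M (-n).toNat).degree = ((-(3 * n + 1)).toNat : ℕ) ∧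
    (RMnegPoly M (-n).toNat).coeff (-(3 * n + 1)).toNat
      = (-1) ^ (n + 1) * M ^ (-4 * n - 2) ∧
    (RMnegPoly M (-n).toNat).roots.card = (-(3 * n + 1)).toNat := by
  obtain ⟨m, hm⟩ : ∃ m : ℕ, (-n).toNat = m + 1 := ⟨(-n).toNat - 1, by omega⟩
  have hnm : n = -(m + 1 : ℕ) := by omega
  have haux := RM_aux M hM m
  have htop : (-(3 * n + 1)).toNat = 3 * m + 2 := by omega
  have hdeg : (RMnegPoly M (-n).toNat).degree = ((-(3 * n + 1)).toNat : ℕ) := by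
    rw [hm, htop]; exact haux.1
  have hnd : (RMnegPoly M (-n).toNat).natDegree = (-(3 * n + 1)).toNat :=
    natDegree_eq_of_degree_eq_some hdeg
  refine ⟨hdeg, ?_, ?_⟩
  · rw [hm, htop, haux.2]
    congr 1
    · rw [show n + 1 = -(m : ℤ) by omega, zpow_neg, zpow_natCast, ← inv_pow, inv_neg, inv_one]
    · rw [show -4 * n - 2 = ((4 * m + 2 : ℕ) : ℤ) by push_cast; omega, zpow_natCast]
  · rw [← hnd]
    exact (splits_iff_card_roots.1 (IsAlgClosed.splits _))
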